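/- arXiv:2311.16886 — 9 statements merged into one kernel-verified Lean document; each statement's English description precedes it below -/
import Mathlib

section
/- Let d, m, n be positive natural numbers. Let A be an m×n row-stochastic real matrix admitting a quantum implementation in dimension d, i.e., there exist d×d complex matrices ρ_1,…,ρ_m (each positive semidefinite with trace 1) and M_1,…,M_n (each positive semidefinite, with M_1+⋯+M_n equal to the identity) such that A_{ij} = Re(tr(ρ_i M_j)) for all i,j. Then λmax(A) := Σ_j max_i A_{ij} ≤ d. -/
/-! A state `ρ` is dominated by `(tr ρ) • 1` in the Loewner order, since each eigenvalue of a
positive semidefinite matrix is at most their sum. Pairing against an effect `M` preserves this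
order, so every entry in column `j` is at most `Re tr M_j`, and the column maxima sum to at most
`tr (∑ M_j) = tr 1 = d`. -/

open Matrix BigOperators
open scoped ComplexOrder

/-- A real matrix is row-stochastic if all entries are nonnegative
and each row sums to 1. -/
def RowStochastic {m n : ℕ} (A : Matrix (Fin m) (Fin n) ℝ) : Prop :=
  (∀ i j, 0 ≤ A i j) ∧ ∀ i, ∑ j, A i j = 1

/-- `A` admits a quantum implementation in dimension `d`: there are states
`ρ i` (PSD, trace one) and POVM effects `M j` (PSD, summing to the identity)
with `A i j = Re (tr (ρ i * M j))`. -/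
def QuantumImpl (d m n : ℕ) (A : Matrix (Fin m) (Fin n) ℝ) : Prop :=
  ∃ (ρ : Fin m → Matrix (Fin d) (Fin d) ℂ) (M : Fin n → Matrix (Fin d) (Fin d) ℂ),
    (∀ i, (ρ i).PosSemidef ∧ (ρ i).trace = 1) ∧
    (∀ j, (M j).PosSemidef) ∧ (∑ j, M j = 1) ∧
    (∀ i j, A i j = ((ρ i * M j).trace).re)

/-- The max monotone `λmax(A) = Σ_j max_i A i j`. -/
noncomputable def lmax {m n : ℕ} (A : Matrix (Fin m) (Fin n) ℝ) : ℝ :=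
  ∑ j, ⨆ i, A i j

/-- The min monotone `λmin(A) = −Σ_j min_i A i j`. -/
noncomputable def lmin {m n : ℕ} (A : Matrix (Fin m) (Fin n) ℝ) : ℝ :=
  - ∑ j, ⨅ i, A i j

/-- `UWMaj B A` : `B` is ultraweakly majorized by `A` (i.e. `B ⪯ A`),
meaning `B = L * A * R` for some row-stochastic `L`, `R`. -/
def UWMaj {m' n' m n : ℕ} (B : Matrix (Fin m') (Fin n') ℝ)
    (A : Matrix (Fin m) (Fin n) ℝ) : Prop :=
  ∃ (L : Matrix (Fin m') (Fin m) ℝ) (R : Matrix (Fin n) (Fin n') ℝ),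
    RowStochastic L ∧ RowStochastic R ∧ L * A * R = B

section

open scoped MatrixOrder

namespace Matrix

variable {n 𝕜 : Type*} [Fintype n] [DecidableEq n] [RCLike 𝕜]

lemma PosSemidef.eigenvalues_le_re_trace {A : Matrix n n 𝕜} (hA : A.PosSemidef) (i : n) :
    hA.1.eigenvalues i ≤ RCLike.re A.trace := by
  rw [hA.1.trace_eq_sum_eigenvalues, map_sum]
  simp only [RCLike.ofReal_re]
  exact Finset.single_le_sum (fun j _ => hA.eigenvalues_nonneg j) (Finset.mem_univ i)

lemma PosSemidef.le_re_trace_smul_one {A : Matrix n n 𝕜} (hA : A.PosSemidef) :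
    A ≤ RCLike.re A.trace • (1 : Matrix n n 𝕜) := by
  rw [← Algebra.algebraMap_eq_smul_one]
  refine le_algebraMap_of_spectrum_le (fun x hx => ?_) hA.1.isSelfAdjoint
  obtain ⟨i, rfl⟩ := hA.1.spectrum_real_eq_range_eigenvalues ▸ hx
  exact hA.eigenvalues_le_re_trace i

lemma PosSemidef.trace_mul_nonneg {A B : Matrix n n 𝕜} (hA : A.PosSemidef) (hB : B.PosSemidef) :
    0 ≤ (A * B).trace := by
  obtain ⟨C, rfl⟩ := CStarAlgebra.nonneg_iff_eq_star_mul_self.mp hB.nonneg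
  rw [star_eq_conjTranspose, ← mul_assoc, trace_mul_cycle]
  exact (hA.mul_mul_conjTranspose_same C).trace_nonneg

lemma trace_mul_le_trace_mul_of_le {A B M : Matrix n n 𝕜} (hAB : A ≤ B) (hM : M.PosSemidef) :
    (A * M).trace ≤ (B * M).trace := by
  rw [← sub_nonneg, ← trace_sub, ← sub_mul]
  exact hAB.trace_mul_nonneg hM

lemma PosSemidef.re_trace_mul_le_of_trace_eq_one {ρ M : Matrix n n 𝕜} (hρ : ρ.PosSemidef)
    (htr : ρ.trace = 1) (hM : M.PosSemidef) : RCLike.re (ρ * M).trace ≤ RCLike.re M.trace := by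
  have hρ_le : ρ ≤ 1 := by simpa [htr] using hρ.le_re_trace_smul_one
  simpa using RCLike.re_le_re (trace_mul_le_trace_mul_of_le hρ_le hM)

end Matrix

end

theorem lmax_le_dim_general (d m n : ℕ)
    (A : Matrix (Fin m) (Fin n) ℝ)
    (hQ : QuantumImpl d m n A) :
    lmax A ≤ d := by
  obtain ⟨ρ, M, hρ, hM, hsum, hA⟩ := hQ
  have hentry : ∀ i j, A i j ≤ (M j).trace.re := fun i j =>
    (hA i j).trans_le ((hρ i).1.re_trace_mul_le_of_trace_eq_one (hρ i).2 (hM j))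
  have hcol : ∀ j, ⨆ i, A i j ≤ (M j).trace.re := fun j =>
    Real.iSup_le (hentry · j) (Complex.nonneg_iff.mp (hM j).trace_nonneg).1
  calc lmax A ≤ ∑ j, (M j).trace.re := Finset.sum_le_sum fun j _ => hcol j
    _ = (∑ j, M j).trace.re := by rw [trace_sum, Complex.re_sum]
    _ = d := by simp [hsum]

/-- if a row-stochastic matrix has a quantum implementation in
dimension `d`, then `λmax(A) ≤ d`. -/
theorem lmax_le_dim (d m n : ℕ) (hd : 0 < d) (hm : 0 < m) (hn : 0 < n)
    (A : Matrix (Fin m) (Fin n) ℝ) (hA : RowStochastic A)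
    (hQ : QuantumImpl d m n A) :
    lmax A ≤ d :=
  lmax_le_dim_general d m n A hQ
end

section
/- Let d, m, n be positive natural numbers and let A be an m×n row-stochastic real matrix with a quantum implementation in dimension d given by states ρ_1,…,ρ_m and POVM effects M_1,…,M_n. If λmax(A) = d, then every effect M_j has rank at most 1, and moreover for every j the column maximum max_i A_{ij} equals the largest eigenvalue of M_j. -/
open Matrix BigOperators
open scoped ComplexOrder

lemma psd_diag_re_nonneg {d : ℕ} {C : Matrix (Fin d) (Fin d) ℂ} (hC : C.PosSemidef)
    (k : Fin d) : 0 ≤ (C k k).re := by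
  have := hC.re_dotProduct_nonneg (Pi.single k 1)
  simpa [dotProduct, mulVec, Pi.single_apply, Finset.sum_ite_eq, Finset.sum_ite_eq'] using this

lemma psd_trace_re_nonneg {d : ℕ} {C : Matrix (Fin d) (Fin d) ℂ} (hC : C.PosSemidef) :
    0 ≤ (C.trace).re := by
  rw [Matrix.trace, Complex.re_sum]
  exact Finset.sum_nonneg fun k _ => psd_diag_re_nonneg hC k

lemma trace_mul_psd_nonneg {d : ℕ} {A B : Matrix (Fin d) (Fin d) ℂ}
    (hA : A.PosSemidef) (hB : B.PosSemidef) : 0 ≤ ((A * B).trace).re := by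
  open scoped MatrixOrder in
  have hS := (CFC.sqrt_nonneg B).posSemidef
  open scoped MatrixOrder in
  have h1 : A * B = A * CFC.sqrt B * CFC.sqrt B := by
    rw [mul_assoc, CFC.sqrt_mul_sqrt_self B hB.nonneg]
  have h2 : (A * CFC.sqrt B * CFC.sqrt B).trace = ((CFC.sqrt B)ᴴ * A * CFC.sqrt B).trace := by
    rw [trace_mul_cycle, hS.1.eq]
  rw [h1, h2]
  exact psd_trace_re_nonneg (hA.conjTranspose_mul_mul_same _)

lemma trace_eq_sum_eigs {d : ℕ} {M : Matrix (Fin d) (Fin d) ℂ} (hM : M.IsHermitian) :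
    M.trace = ∑ k, (hM.eigenvalues k : ℂ) := by
  conv_lhs => rw [hM.spectral_theorem, Unitary.conjStarAlgAut_apply]
  rw [trace_mul_cycle]
  have hU : (star (hM.eigenvectorUnitary : Matrix (Fin d) (Fin d) ℂ)) *
      (hM.eigenvectorUnitary : Matrix (Fin d) (Fin d) ℂ) = 1 := by
    simpa using (Matrix.mem_unitaryGroup_iff'.mp hM.eigenvectorUnitary.2)
  rw [hU, one_mul, trace_diagonal]
  rfl

lemma re_trace_mul_le_sup {d : ℕ} (hd : 0 < d) {ρ M : Matrix (Fin d) (Fin d) ℂ}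
    (hρ : ρ.PosSemidef) (hρt : ρ.trace = 1) (hM : M.PosSemidef) :
    ((ρ * M).trace).re ≤ ⨆ k, hM.1.eigenvalues k := by
  haveI : Nonempty (Fin d) := Fin.pos_iff_nonempty.mp hd
  set c : ℝ := ⨆ k, hM.1.eigenvalues k with hc
  have hk : ∀ k, hM.1.eigenvalues k ≤ c :=
    fun k => le_ciSup (Set.Finite.bddAbove (Set.finite_range _)) k
  set U : Matrix (Fin d) (Fin d) ℂ := (hM.1.eigenvectorUnitary : Matrix (Fin d) (Fin d) ℂ)
  have hUU : U * star U = 1 := Matrix.mem_unitaryGroup_iff.mp hM.1.eigenvectorUnitary.2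
  set D : Matrix (Fin d) (Fin d) ℂ := diagonal (fun k => ((c - hM.1.eigenvalues k : ℝ) : ℂ))
  have hD : D.PosSemidef := by
    refine Matrix.PosSemidef.diagonal fun k => ?_
    simp only [Pi.zero_apply, Complex.zero_le_real]
    exact sub_nonneg.mpr (hk k)
  have hN : ((c : ℂ) • 1 - M).PosSemidef := by
    have key : (c : ℂ) • 1 - M = U * D * Uᴴ := by
      conv_lhs => rw [hM.1.spectral_theorem, Unitary.conjStarAlgAut_apply]
      have h1 : (c : ℂ) • (1 : Matrix (Fin d) (Fin d) ℂ) = U * ((c : ℂ) • 1) * star U := by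
        rw [mul_smul_comm, mul_one, smul_mul_assoc, hUU]
      rw [h1, ← sub_mul, ← mul_sub, Matrix.smul_one_eq_diagonal, Matrix.diagonal_sub]
      rw [Matrix.star_eq_conjTranspose]
      congr 2
      ext k
      simp [D]
    rw [key]
    exact hD.mul_mul_conjTranspose_same U
  have h0 := trace_mul_psd_nonneg hρ hN
  have h1 : (ρ * ((c : ℂ) • 1 - M)).trace = (c : ℂ) - (ρ * M).trace := by
    rw [mul_sub, mul_smul_comm, mul_one, trace_sub, trace_smul, hρt, smul_eq_mul, mul_one]
  rw [h1, Complex.sub_re, Complex.ofReal_re] at h0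
  linarith

lemma sup_eig_le_trace_re {d : ℕ} (hd : 0 < d) {M : Matrix (Fin d) (Fin d) ℂ}
    (hM : M.PosSemidef) : (⨆ k, hM.1.eigenvalues k) ≤ (M.trace).re := by
  haveI : Nonempty (Fin d) := Fin.pos_iff_nonempty.mp hd
  have ht : (M.trace).re = ∑ k, hM.1.eigenvalues k := by
    rw [trace_eq_sum_eigs hM.1, Complex.re_sum]
    simp
  rw [ht]
  exact ciSup_le fun k => Finset.single_le_sum
    (fun i _ => hM.eigenvalues_nonneg i) (Finset.mem_univ k)

theorem effects_rank_one_of_lmax_eq_dim' (d m n : ℕ) (hd : 0 < d) (hm : 0 < m) (hn : 0 < n)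
    (A : Matrix (Fin m) (Fin n) ℝ)
    (hA : (∀ i j, 0 ≤ A i j) ∧ ∀ i, ∑ j, A i j = 1)
    (ρ : Fin m → Matrix (Fin d) (Fin d) ℂ) (M : Fin n → Matrix (Fin d) (Fin d) ℂ)
    (hρ : ∀ i, (ρ i).PosSemidef ∧ (ρ i).trace = 1)
    (hM : ∀ j, (M j).PosSemidef) (hMsum : ∑ j, M j = 1)
    (himpl : ∀ i j, A i j = ((ρ i * M j).trace).re)
    (hlmax : ∑ j, ⨆ i, A i j = d) :
    ∀ j, (M j).rank ≤ 1 ∧ (⨆ i, A i j) = ⨆ k, (hM j).isHermitian.eigenvalues k := by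
  haveI : Nonempty (Fin d) := Fin.pos_iff_nonempty.mp hd
  haveI : Nonempty (Fin m) := Fin.pos_iff_nonempty.mp hm
  set s : Fin n → ℝ := fun j => ⨆ i, A i j with hs
  set t : Fin n → ℝ := fun j => ⨆ k, (hM j).isHermitian.eigenvalues k with ht
  set r : Fin n → ℝ := fun j => ((M j).trace).re with hr
  have hst : ∀ j, s j ≤ t j := fun j => ciSup_le fun i => by
    rw [himpl i j]
    exact re_trace_mul_le_sup hd (hρ i).1 (hρ i).2 (hM j)
  have htr : ∀ j, t j ≤ r j := fun j => sup_eig_le_trace_re hd (hM j)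
  have hsum_r : ∑ j, r j = d := by
    have h1 : ∑ j, (M j).trace = (d : ℂ) := by
      rw [← Matrix.trace_sum, hMsum, Matrix.trace_one]
      simp
    have : ∑ j, r j = (∑ j, (M j).trace).re := (Complex.re_sum _ _).symm
    rw [this, h1, Complex.natCast_re]
  have hzero : ∑ j, (r j - s j) = 0 := by
    rw [Finset.sum_sub_distrib, hsum_r, hlmax, sub_self]
  have heach : ∀ j, r j - s j = 0 := by
    intro j
    exact (Finset.sum_eq_zero_iff_of_nonneg
      (fun j _ => sub_nonneg.mpr ((hst j).trans (htr j)))).mp hzero j (Finset.mem_univ j)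
  have hsr : ∀ j, s j = r j := fun j => by have := heach j; linarith
  have hstt : ∀ j, s j = t j := fun j => le_antisymm (hst j) (by rw [hsr j]; exact htr j)
  intro j
  refine ⟨?_, hstt j⟩
  -- rank ≤ 1
  have hteq : t j = r j := by rw [← hstt j, hsr j]
  obtain ⟨k0, hk0⟩ := exists_eq_ciSup_of_finite (f := (hM j).isHermitian.eigenvalues)
  have hrsum : r j = ∑ k, (hM j).isHermitian.eigenvalues k := by
    rw [hr]
    simp only
    rw [trace_eq_sum_eigs (hM j).isHermitian, Complex.re_sum]
    simp
  have hzero2 : ∑ k ∈ Finset.univ.erase k0, (hM j).isHermitian.eigenvalues k = 0 := by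
    have h2 : (hM j).isHermitian.eigenvalues k0 +
        ∑ k ∈ Finset.univ.erase k0, (hM j).isHermitian.eigenvalues k
        = ∑ k, (hM j).isHermitian.eigenvalues k :=
      Finset.add_sum_erase _ _ (Finset.mem_univ k0)
    have h3 : (hM j).isHermitian.eigenvalues k0 = ∑ k, (hM j).isHermitian.eigenvalues k := by
      rw [hk0]
      show t j = _
      rw [hteq, hrsum]
    linarith
  have hzk : ∀ k, k ≠ k0 → (hM j).isHermitian.eigenvalues k = 0 := by
    intro k hk
    have := (Finset.sum_eq_zero_iff_of_nonneg
      (fun k _ => (hM j).eigenvalues_nonneg k)).mp hzero2 k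
    exact this (Finset.mem_erase.mpr ⟨hk, Finset.mem_univ k⟩)
  rw [(hM j).isHermitian.rank_eq_card_non_zero_eigs]
  refine Fintype.card_le_one_iff.mpr fun a b => ?_
  have ha : a.1 = k0 := by by_contra h; exact a.2 (hzk a.1 h)
  have hb : b.1 = k0 := by by_contra h; exact b.2 (hzk b.1 h)
  exact Subtype.ext (ha.trans hb.symm)


/-- if `λmax(A) = d` for a quantum implementation in dimension `d`,
then every effect `M j` has rank at most 1, and each column maximum of `A`
equals the largest eigenvalue of the corresponding effect. -/
theorem effects_rank_one_of_lmax_eq_dim (d m n : ℕ) (hd : 0 < d) (hm : 0 < m) (hn : 0 < n)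
    (A : Matrix (Fin m) (Fin n) ℝ) (hA : RowStochastic A)
    (ρ : Fin m → Matrix (Fin d) (Fin d) ℂ) (M : Fin n → Matrix (Fin d) (Fin d) ℂ)
    (hρ : ∀ i, (ρ i).PosSemidef ∧ (ρ i).trace = 1)
    (hM : ∀ j, (M j).PosSemidef) (hMsum : ∑ j, M j = 1)
    (himpl : ∀ i j, A i j = ((ρ i * M j).trace).re)
    (hlmax : lmax A = d) :
    ∀ j, (M j).rank ≤ 1 ∧ (⨆ i, A i j) = ⨆ k, (hM j).isHermitian.eigenvalues k := by
  exact effects_rank_one_of_lmax_eq_dim' d m n hd hm hn A hA ρ M hρ hM hMsum himpl hlmax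
end

section
/- Let A be an m×n row-stochastic real matrix that has a quantum implementation in dimension d, and let L be an m'×m row-stochastic matrix and R an n×n' row-stochastic matrix. Then the m'×n' row-stochastic matrix B = L·A·R also has a quantum implementation in dimension d (namely with states ρ'_i = Σ_k L_{ik} ρ_k and effects M'_j = Σ_k R_{kj} M_k). -/
open Matrix BigOperators
open scoped ComplexOrder

theorem posSemidef_sum_smul {ι n : Type*} [Fintype ι] {w : ι → ℝ} (hw : ∀ i, 0 ≤ w i)
    {X : ι → Matrix n n ℂ} (hX : ∀ i, (X i).PosSemidef) : (∑ i, w i • X i).PosSemidef :=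
  posSemidef_sum _ fun i _ => (hX i).smul (hw i)

theorem trace_sum_smul_eq_one {ι n : Type*} [Fintype ι] [Fintype n] {w : ι → ℝ}
    (hw : ∑ i, w i = 1) {X : ι → Matrix n n ℂ} (hX : ∀ i, (X i).trace = 1) :
    (∑ i, w i • X i).trace = 1 := by
  simp only [trace_sum, trace_smul, hX, ← Finset.sum_smul, hw, one_smul]

theorem sum_sum_smul_eq_sum {ι κ R M : Type*} [Fintype ι] [Fintype κ] [Semiring R]
    [AddCommMonoid M] [Module R M] {W : κ → ι → R} (hW : ∀ k, ∑ i, W k i = 1) (X : κ → M) :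
    ∑ i, ∑ k, W k i • X k = ∑ k, X k := by
  rw [Finset.sum_comm]
  simp only [← Finset.sum_smul, hW, one_smul]

theorem re_trace_sum_smul_mul_sum_smul {ι κ n : Type*} [Fintype ι] [Fintype κ] [Fintype n]
    (a : ι → ℝ) (b : κ → ℝ) (X : ι → Matrix n n ℂ) (Y : κ → Matrix n n ℂ) :
    ((∑ k, a k • X k) * ∑ l, b l • Y l).trace.re =
      ∑ k, ∑ l, a k * b l * (X k * Y l).trace.re := by
  simp only [Finset.sum_mul_sum, smul_mul_smul, trace_sum, trace_smul, Complex.re_sum,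
    Complex.smul_re, smul_eq_mul]

theorem mul_mul_apply_eq_sum_sum {m' m n n' α : Type*} [Fintype m] [Fintype n] [CommSemiring α]
    (L : Matrix m' m α) (A : Matrix m n α) (R : Matrix n n' α) (i : m') (j : n') :
    (L * A * R) i j = ∑ k, ∑ l, L i k * R l j * A k l := by
  simp only [mul_apply, Finset.sum_mul]
  rw [Finset.sum_comm]
  exact Finset.sum_congr rfl fun _ _ => Finset.sum_congr rfl fun _ _ => by ring

theorem quantumImpl_of_processing_general (d m n m' n' : ℕ)
    (A : Matrix (Fin m) (Fin n) ℝ)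
    (hQ : QuantumImpl d m n A)
    (L : Matrix (Fin m') (Fin m) ℝ) (hL : RowStochastic L)
    (R : Matrix (Fin n) (Fin n') ℝ) (hR : RowStochastic R) :
    QuantumImpl d m' n' (L * A * R) := by
  obtain ⟨ρ, M, hρ, hM, hM_sum, hA⟩ := hQ
  refine ⟨fun i => ∑ k, L i k • ρ k, fun j => ∑ l, R l j • M l, fun i => ⟨?_, ?_⟩, fun j => ?_,
    ?_, fun i j => ?_⟩
  · exact posSemidef_sum_smul (hL.1 i) fun k => (hρ k).1
  · exact trace_sum_smul_eq_one (hL.2 i) fun k => (hρ k).2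
  · exact posSemidef_sum_smul (fun l => hR.1 l j) hM
  · rw [sum_sum_smul_eq_sum hR.2, hM_sum]
  · simp only [re_trace_sum_smul_mul_sum_smul, mul_mul_apply_eq_sum_sum, hA]

/-- pre- and post-processing a quantum-implementable matrix with
row-stochastic matrices yields a quantum-implementable matrix in the same dimension. -/
theorem quantumImpl_of_processing (d m n m' n' : ℕ)
    (A : Matrix (Fin m) (Fin n) ℝ) (hA : RowStochastic A)
    (hQ : QuantumImpl d m n A)
    (L : Matrix (Fin m') (Fin m) ℝ) (hL : RowStochastic L)
    (R : Matrix (Fin n) (Fin n') ℝ) (hR : RowStochastic R) :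
    QuantumImpl d m' n' (L * A * R) :=
  quantumImpl_of_processing_general d m n m' n' A hQ L hL R hR
end

section
/- Let A be an m×n row-stochastic real matrix, L an m'×m row-stochastic matrix, and R an n×n' row-stochastic matrix, and set B = L·A·R. Then λmax(B) ≤ λmax(A), where λmax(C) := Σ_j max_i C_{ij}. (That is, λmax is an ultraweak monotone.) -/
open Matrix BigOperators
open scoped ComplexOrder

/-- `λmax` is an ultraweak monotone. -/
theorem lmax_monotone (m n m' n' : ℕ) (hm : 0 < m) (hn : 0 < n) (hm' : 0 < m') (hn' : 0 < n')
    (A : Matrix (Fin m) (Fin n) ℝ) (hA : RowStochastic A)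
    (L : Matrix (Fin m') (Fin m) ℝ) (hL : RowStochastic L)
    (R : Matrix (Fin n) (Fin n') ℝ) (hR : RowStochastic R) :
    lmax (L * A * R) ≤ lmax A := by
  haveI : Nonempty (Fin m) := ⟨⟨0, hm⟩⟩
  haveI : Nonempty (Fin m') := ⟨⟨0, hm'⟩⟩
  unfold lmax
  have key : ∀ j', (⨆ i', (L * A * R) i' j') ≤ ∑ j, (⨆ i, A i j) * R j j' := by
    intro j'
    apply ciSup_le
    intro i'
    rw [Matrix.mul_apply]
    apply Finset.sum_le_sum
    intro j _
    apply mul_le_mul_of_nonneg_right _ (hR.1 j j')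
    rw [Matrix.mul_apply]
    calc ∑ k, L i' k * A k j
        ≤ ∑ k, L i' k * (⨆ i, A i j) := by
          apply Finset.sum_le_sum
          intro k _
          exact mul_le_mul_of_nonneg_left
            (le_ciSup (f := fun i => A i j) (Set.Finite.bddAbove (Set.finite_range _)) k) (hL.1 i' k)
      _ = ⨆ i, A i j := by rw [← Finset.sum_mul, hL.2 i', one_mul]
  calc ∑ j', ⨆ i', (L * A * R) i' j'
      ≤ ∑ j', ∑ j, (⨆ i, A i j) * R j j' := Finset.sum_le_sum fun j' _ => key j'
    _ = ∑ j, (⨆ i, A i j) * ∑ j', R j j' := by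
        rw [Finset.sum_comm]; simp [Finset.mul_sum]
    _ = ∑ j, ⨆ i, A i j := by simp [hR.2]
end

section
/- Let A be an m×n row-stochastic real matrix, L an m'×m row-stochastic matrix, and R an n×n' row-stochastic matrix, and set B = L·A·R. Then λmin(B) ≤ λmin(A), where λmin(C) := −Σ_j min_i C_{ij}. (That is, λmin is an ultraweak monotone.) -/
open Matrix BigOperators
open scoped ComplexOrder

/-- `λmin` is an ultraweak monotone. -/
theorem lmin_monotone (m n m' n' : ℕ) (hm : 0 < m) (hn : 0 < n) (hm' : 0 < m') (hn' : 0 < n')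
    (A : Matrix (Fin m) (Fin n) ℝ) (hA : RowStochastic A)
    (L : Matrix (Fin m') (Fin m) ℝ) (hL : RowStochastic L)
    (R : Matrix (Fin n) (Fin n') ℝ) (hR : RowStochastic R) :
    lmin (L * A * R) ≤ lmin A := by
  have hmne : Nonempty (Fin m) := ⟨⟨0, hm⟩⟩
  have hm2ne : Nonempty (Fin m') := ⟨⟨0, hm'⟩⟩
  unfold lmin
  rw [neg_le_neg_iff]
  set f : Fin n → ℝ := fun j => ⨅ i, A i j with hf
  have hbdd : ∀ j, BddBelow (Set.range fun i => A i j) := fun j => Set.Finite.bddBelow (Set.finite_range _)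
  have key : ∀ j', ∑ j, f j * R j j' ≤ ⨅ i', (L * A * R) i' j' := by
    intro j'
    refine le_ciInf fun i' => ?_
    have : (L * A * R) i' j' = ∑ j, (∑ k, L i' k * A k j) * R j j' := by
      simp [Matrix.mul_apply]
    rw [this]
    refine Finset.sum_le_sum fun j _ => ?_
    refine mul_le_mul_of_nonneg_right ?_ (hR.1 j j')
    calc f j = ∑ k, L i' k * f j := by
          rw [← Finset.sum_mul, hL.2, one_mul]
      _ ≤ ∑ k, L i' k * A k j := by
          refine Finset.sum_le_sum fun k _ => ?_
          exact mul_le_mul_of_nonneg_left (ciInf_le (hbdd j) k) (hL.1 i' k)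
  calc ∑ j, f j = ∑ j, f j * ∑ j', R j j' := by
        simp [hR.2]
    _ = ∑ j', ∑ j, f j * R j j' := by
        rw [Finset.sum_comm]
        simp [Finset.mul_sum]
    _ ≤ ∑ j', ⨅ i', (L * A * R) i' j' := Finset.sum_le_sum fun j' _ => key j'
end

section
/- Let A be an m×k row-stochastic real matrix and suppose the n×n identity matrix I_n is ultraweakly majorized by A, i.e., there exist row-stochastic L (n×m) and R (k×n) with L·A·R = I_n. Then A has n rows with pairwise disjoint supports: there exist row indices i_1,…,i_n, pairwise distinct, such that for every pair r ≠ s and every column j, A_{i_r j} · A_{i_s j} = 0. -/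
open Matrix BigOperators
open scoped ComplexOrder

/-- if `I_n ⪯ A`, then `A` has `n` rows with pairwise disjoint
supports. -/
theorem disjoint_rows_of_id_majorized (m k n : ℕ)
    (A : Matrix (Fin m) (Fin k) ℝ) (hA : RowStochastic A)
    (hmaj : UWMaj (1 : Matrix (Fin n) (Fin n) ℝ) A) :
    ∃ f : Fin n → Fin m, Function.Injective f ∧
      ∀ r s : Fin n, r ≠ s → ∀ j : Fin k, A (f r) j * A (f s) j = 0 := by
  obtain ⟨L, R, ⟨hL0, hL1⟩, ⟨hR0, hR1⟩, hLR⟩ := hmaj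
  set B := A * R with hBdef
  have hB0 : ∀ i c, 0 ≤ B i c := by
    intro i c
    simp only [hBdef, Matrix.mul_apply]
    exact Finset.sum_nonneg fun j _ => mul_nonneg (hA.1 i j) (hR0 j c)
  have hLB : ∀ r c, ∑ i, L r i * B i c = if r = c then 1 else 0 := by
    intro r c
    have h : (L * B) r c = (1 : Matrix (Fin n) (Fin n) ℝ) r c := by
      rw [hBdef, ← Matrix.mul_assoc, hLR]
    simpa [Matrix.mul_apply, Matrix.one_apply] using h
  have hex : ∀ r : Fin n, ∃ i, L r i ≠ 0 := by
    intro r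
    by_contra h
    push_neg at h
    have h1 := hL1 r
    simp [h] at h1
  choose f hf using hex
  have hBzero : ∀ r c, c ≠ r → B (f r) c = 0 := by
    intro r c hc
    have hsum : ∑ i, L r i * B i c = 0 := by
      rw [hLB, if_neg (Ne.symm hc)]
    have h0 := (Finset.sum_eq_zero_iff_of_nonneg
      (fun i _ => mul_nonneg (hL0 r i) (hB0 i c))).mp hsum (f r) (Finset.mem_univ _)
    rcases mul_eq_zero.mp h0 with h | h
    · exact absurd h (hf r)
    · exact h
  have hBone : ∀ r, B (f r) r = 1 := by
    intro r
    have hrow : ∑ c, B (f r) c = 1 := by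
      simp only [hBdef, Matrix.mul_apply]
      rw [Finset.sum_comm]
      calc ∑ j, ∑ c, A (f r) j * R j c = ∑ j, A (f r) j := by
            refine Finset.sum_congr rfl fun j _ => ?_
            rw [← Finset.mul_sum, hR1 j, mul_one]
        _ = 1 := hA.2 (f r)
    have hs := Finset.sum_eq_single (s := Finset.univ) (f := fun c => B (f r) c) r
      (fun c _ hc => hBzero r c hc) (fun h => absurd (Finset.mem_univ r) h)
    rw [hs] at hrow
    exact hrow
  refine ⟨f, ?_, ?_⟩
  · intro r s hrs
    by_contra hne
    have h0 : B (f r) s = 0 := hBzero r s (Ne.symm hne)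
    rw [hrs] at h0
    rw [hBone s] at h0
    norm_num at h0
  · intro r s hrs j
    by_contra hprod
    have hAr : A (f r) j ≠ 0 := fun h => hprod (by rw [h, zero_mul])
    have hAs : A (f s) j ≠ 0 := fun h => hprod (by rw [h, mul_zero])
    have key : ∀ r' : Fin n, A (f r') j ≠ 0 → ∀ c, c ≠ r' → R j c = 0 := by
      intro r' hA' c hc
      have h0 : B (f r') c = 0 := hBzero r' c hc
      have hsum : ∑ j', A (f r') j' * R j' c = 0 := by
        rw [← Matrix.mul_apply]; exact h0
      have h00 := (Finset.sum_eq_zero_iff_of_nonneg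
        (fun j' _ => mul_nonneg (hA.1 _ j') (hR0 j' c))).mp hsum j (Finset.mem_univ _)
      rcases mul_eq_zero.mp h00 with h | h
      · exact absurd h hA'
      · exact h
    have hall : ∑ c, R j c = 0 := by
      refine Finset.sum_eq_zero fun c _ => ?_
      by_cases hcr : c = r
      · exact key s hAs c (by rw [hcr]; exact hrs)
      · exact key r hAr c hcr
    rw [hR1 j] at hall
    norm_num at hall
end

section
/- Let d ≥ 2 and let A_{d+1} be the (d+1)×(d+1) row-stochastic matrix with 0 on the diagonal and 1/d in every off-diagonal entry. Then the identity matrix I_d and A_{d+1} are ultraweakly incomparable: there exist no row-stochastic matrices L, R with L·I_d·R = A_{d+1}, and no row-stochastic matrices L', R' with L'·A_{d+1}·R' = I_d. -/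
open Matrix BigOperators
open scoped ComplexOrder

/-!
Ultraweak majorization cannot increase the rank, nor the monotone `λmax(C) = Σ_j max_i C i j`:
a row-stochastic `L` replaces each column of `C` by convex combinations of its entries, and a
row-stochastic `R` mixes columns with nonnegative weights summing to one. Now `A_{d+1} = (J - 1)/d`
is invertible, with inverse `J - d • 1`, so it has rank `d + 1 > d = rank I_d`; and all its entries
are at most `1/d`, so `λmax(A_{d+1}) ≤ (d + 1)/d < d = λmax(I_d)` once `d ≥ 2`.
-/

section Monotones

variable {m n m' n' : ℕ}

theorem rank_le_of_uwMaj {B : Matrix (Fin m') (Fin n') ℝ} {A : Matrix (Fin m) (Fin n) ℝ}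
    (h : UWMaj B A) : B.rank ≤ A.rank := by
  obtain ⟨L, R, -, -, rfl⟩ := h
  exact (rank_mul_le_left _ _).trans (rank_mul_le_right _ _)

theorem RowStochastic.mul_apply_le_ciSup {L : Matrix (Fin m') (Fin m) ℝ} (hL : RowStochastic L)
    (A : Matrix (Fin m) (Fin n) ℝ) (i : Fin m') (j : Fin n) : (L * A) i j ≤ ⨆ k, A k j :=
  calc (L * A) i j = ∑ k, L i k * A k j := mul_apply
    _ ≤ ∑ k, L i k * ⨆ k, A k j := by
      gcongr with k
      · exact hL.1 i k
      · exact le_ciSup (Finite.bddAbove_range fun k => A k j) k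
    _ = ⨆ k, A k j := by rw [← Finset.sum_mul, hL.2 i, one_mul]

theorem RowStochastic.lmax_mul_left_le [NeZero m'] {L : Matrix (Fin m') (Fin m) ℝ}
    (hL : RowStochastic L) (A : Matrix (Fin m) (Fin n) ℝ) : lmax (L * A) ≤ lmax A :=
  Finset.sum_le_sum fun j _ => ciSup_le fun i => hL.mul_apply_le_ciSup A i j

theorem RowStochastic.lmax_mul_right_le [NeZero m] {R : Matrix (Fin n) (Fin n') ℝ}
    (hR : RowStochastic R) (A : Matrix (Fin m) (Fin n) ℝ) : lmax (A * R) ≤ lmax A :=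
  calc lmax (A * R) ≤ ∑ j', ∑ j, (⨆ i, A i j) * R j j' := by
        refine Finset.sum_le_sum fun j' _ => ciSup_le fun i => ?_
        rw [mul_apply]
        gcongr with j
        · exact hR.1 j j'
        · exact le_ciSup (Finite.bddAbove_range fun i => A i j) i
    _ = lmax A := by
      rw [Finset.sum_comm]
      simp only [← Finset.mul_sum, hR.2, mul_one, lmax]

theorem lmax_le_of_uwMaj [NeZero m] [NeZero m'] {B : Matrix (Fin m') (Fin n') ℝ}
    {A : Matrix (Fin m) (Fin n) ℝ} (h : UWMaj B A) : lmax B ≤ lmax A := by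
  obtain ⟨L, R, hL, hR, rfl⟩ := h
  exact (hR.lmax_mul_right_le _).trans (hL.lmax_mul_left_le A)

theorem lmax_le_of_forall_le [NeZero m] {A : Matrix (Fin m) (Fin n) ℝ} {c : ℝ}
    (h : ∀ i j, A i j ≤ c) : lmax A ≤ n * c := by
  calc lmax A ≤ ∑ _j : Fin n, c := Finset.sum_le_sum fun j _ => ciSup_le fun i => h i j
    _ = n * c := by simp

theorem lmax_one (d : ℕ) : lmax (1 : Matrix (Fin d) (Fin d) ℝ) = d := by
  have hcol : ∀ j : Fin d, ⨆ i, (1 : Matrix (Fin d) (Fin d) ℝ) i j = 1 := fun j =>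
    have : Nonempty (Fin d) := ⟨j⟩
    le_antisymm (ciSup_le fun i => by by_cases h : i = j <;> simp [one_apply, h])
      (le_ciSup_of_le (Finite.bddAbove_range _) j (by simp))
  simp [lmax, hcol]

end Monotones

section Antidist

variable {d : ℕ}

/-- The matrix `A_{d+1}`. -/
noncomputable def antidist (d : ℕ) : Matrix (Fin (d + 1)) (Fin (d + 1)) ℝ :=
  of fun i j => if i = j then 0 else 1 / (d : ℝ)

@[simp]
theorem antidist_apply (i j : Fin (d + 1)) :
    antidist d i j = if i = j then 0 else 1 / (d : ℝ) := rfl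

theorem antidist_apply_le (i j : Fin (d + 1)) : antidist d i j ≤ 1 / d := by
  rw [antidist_apply]
  split_ifs <;> simp

theorem rowStochastic_antidist (hd : d ≠ 0) : RowStochastic (antidist d) := by
  refine ⟨fun i j => ?_, fun i => ?_⟩
  · rw [antidist_apply]
    split_ifs <;> simp
  · simp only [antidist_apply, one_div, Finset.sum_ite, Finset.sum_const_zero, Finset.filter_ne,
      Finset.sum_const, Finset.mem_univ, Finset.card_erase_of_mem, Finset.card_univ,
      Fintype.card_fin, add_tsub_cancel_right, nsmul_eq_mul, zero_add]
    field_simp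

theorem antidist_mul_inverse (hd : d ≠ 0) :
    antidist d * (of (fun _ _ => 1) - (d : ℝ) • 1) = 1 := by
  have hJ : antidist d * of (fun _ _ => 1) = of fun _ _ => 1 := by
    ext i k
    simpa [mul_apply] using (rowStochastic_antidist hd).2 i
  rw [Matrix.mul_sub, hJ, Matrix.mul_smul, Matrix.mul_one]
  ext i k
  obtain rfl | h := eq_or_ne i k <;> simp [one_apply, *]

theorem rank_antidist (hd : d ≠ 0) : (antidist d).rank = d + 1 := by
  rw [rank_of_isUnit _ ((isUnit_iff_isUnit_det _).mpr
    (isUnit_det_of_right_inverse (antidist_mul_inverse hd))), Fintype.card_fin]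

theorem lmax_antidist_le : lmax (antidist d) ≤ (d + 1) / d := by
  calc lmax (antidist d) ≤ (d + 1 : ℕ) * (1 / d) := lmax_le_of_forall_le antidist_apply_le
    _ = (d + 1) / d := by push_cast; ring

end Antidist

/-- the identity `I_d` and the antidistinguishability matrix
`A_{d+1}` (zero diagonal, `1/d` off-diagonal) are ultraweakly incomparable. -/
theorem id_and_antidist_incomparable (d : ℕ) (hd : 2 ≤ d)
    (A : Matrix (Fin (d + 1)) (Fin (d + 1)) ℝ)
    (hAdef : ∀ i j, A i j = if i = j then 0 else 1 / (d : ℝ)) :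
    ¬ UWMaj A (1 : Matrix (Fin d) (Fin d) ℝ) ∧
    ¬ UWMaj (1 : Matrix (Fin d) (Fin d) ℝ) A := by
  obtain rfl : A = antidist d := Matrix.ext hAdef
  have : NeZero d := ⟨by omega⟩
  constructor
  · intro h
    have hrank := rank_le_of_uwMaj h
    rw [rank_antidist (NeZero.ne d), rank_one, Fintype.card_fin] at hrank
    omega
  · intro h
    have hlmax := (lmax_le_of_uwMaj h).trans lmax_antidist_le
    rw [lmax_one, le_div_iff₀ (by positivity)] at hlmax
    have hd' : (2 : ℝ) ≤ d := by exact_mod_cast hd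
    nlinarith
end

section
/- Let d, m, n be positive natural numbers and let A be an m×n row-stochastic real matrix with a quantum implementation in dimension d. Suppose A is incompressible (every row-stochastic matrix ultraweakly equivalent to A has at least m rows and at least n columns) and λmax(A) = d. Let L be an (m+1)×m row-stochastic matrix and R an n×n row-stochastic matrix, and set B = L·A·R. If λmax(B) = d, then R is a permutation matrix. -/
open Matrix BigOperators
open scoped ComplexOrder

/-- `A` is incompressible: every row-stochastic matrix ultraweakly equivalent
to `A` has at least as many rows and at least as many columns as `A`. -/
def Incompressible {m n : ℕ} (A : Matrix (Fin m) (Fin n) ℝ) : Prop :=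
  ∀ (m' n' : ℕ) (A' : Matrix (Fin m') (Fin n') ℝ),
    RowStochastic A' → UWMaj A' A → UWMaj A A' → m ≤ m' ∧ n ≤ n'

/-!
For a state `ρ` and an effect `M`, `Re tr (ρ M) ≤ tr M`, with equality only if `M = tr M • ρ`
(diagonalize `ρ`: its eigenvalues are weights summing to one). Hence `λmax(A) ≤ ∑ tr M j = d`,
and `λmax(A) = d` forces the maximum of column `j` of `A` to be `tr M j`. Neither `L` nor `R`
can increase `λmax`, so `λmax(B) = d` forces, for every column `j` of `R`, one row `i` of `A`
that is maximal in every column `k` with `R k j > 0`. Those effects `M k` are multiples of `ρ i`,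
so the corresponding columns of `A` are proportional; merging two proportional columns would
compress `A`. So every column of `R` has a single positive entry: `R` is a permutation matrix.
-/

open Finset

namespace RowStochastic

variable {a b c : ℕ}

lemma one : RowStochastic (1 : Matrix (Fin a) (Fin a) ℝ) :=
  ⟨fun i j => by by_cases h : i = j <;> simp [one_apply, h], fun i => by simp [one_apply]⟩

lemma mul {P : Matrix (Fin a) (Fin b) ℝ} {Q : Matrix (Fin b) (Fin c) ℝ}
    (hP : RowStochastic P) (hQ : RowStochastic Q) : RowStochastic (P * Q) :=
  ⟨fun i j => mul_apply (M := P) ▸ sum_nonneg fun k _ => mul_nonneg (hP.1 i k) (hQ.1 k j),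
    fun i => by
    simp_rw [mul_apply]
    rw [sum_comm]
    simp [← mul_sum, hQ.2, hP.2]⟩

lemma exists_pos {P : Matrix (Fin a) (Fin b) ℝ} (hP : RowStochastic P) (i : Fin a) :
    ∃ j, 0 < P i j := by
  by_contra! h
  have : ∑ j, P i j ≤ 0 := sum_nonpos fun j _ => h j
  linarith [hP.2 i]

lemma exists_perm_of_pos_unique {P : Matrix (Fin a) (Fin a) ℝ} (hP : RowStochastic P)
    (hcol : ∀ j k k', 0 < P k j → 0 < P k' j → k = k') :
    ∃ σ : Equiv.Perm (Fin a), ∀ i j, P i j = if σ i = j then 1 else 0 := by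
  choose f hf using hP.exists_pos
  have hbij : Function.Bijective f :=
    Finite.injective_iff_bijective.mp fun k k' h => hcol (f k) k k' (hf k) (h ▸ hf k')
  have hzero : ∀ i j, f i ≠ j → P i j = 0 := by
    intro i j hij
    obtain ⟨i', rfl⟩ := hbij.2 j
    refine le_antisymm (not_lt.mp fun hpos => hij ?_) (hP.1 i _)
    rw [hcol _ i i' hpos (hf i')]
  refine ⟨Equiv.ofBijective f hbij, fun i j => ?_⟩
  simp only [Equiv.ofBijective_apply]
  split_ifs with hij
  · subst hij
    rw [← hP.2 i, sum_eq_single (f i) (fun j _ hj => hzero i j (Ne.symm hj)) (by simp)]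
  · exact hzero i j hij

end RowStochastic

section ColumnMaxima

variable {a b c : ℕ}

lemma le_iSup_col (C : Matrix (Fin a) (Fin b) ℝ) (i : Fin a) (j : Fin b) :
    C i j ≤ ⨆ i, C i j :=
  le_ciSup (f := fun i => C i j) (Set.finite_range _).bddAbove i

variable [NeZero a]

lemma iSup_col_mul_le {L : Matrix (Fin a) (Fin b) ℝ} (hL : RowStochastic L)
    (C : Matrix (Fin b) (Fin c) ℝ) (j : Fin c) : ⨆ i, (L * C) i j ≤ ⨆ k, C k j := by
  have : NeZero b := ⟨by rintro rfl; simpa using hL.2 0⟩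
  refine ciSup_le fun i => ?_
  calc (L * C) i j = ∑ k, L i k * C k j := mul_apply
    _ ≤ ∑ k, L i k * ⨆ k, C k j :=
      sum_le_sum fun k _ => mul_le_mul_of_nonneg_left (le_iSup_col C k j) (hL.1 i k)
    _ = ⨆ k, C k j := by rw [← sum_mul, hL.2 i, one_mul]

lemma RowStochastic.lmax_mul_le {L : Matrix (Fin a) (Fin b) ℝ} (hL : RowStochastic L)
    (C : Matrix (Fin b) (Fin c) ℝ) : lmax (L * C) ≤ lmax C :=
  sum_le_sum fun j _ => iSup_col_mul_le hL C j

lemma iSup_col_mul_le_sum {R : Matrix (Fin b) (Fin c) ℝ} (hR : ∀ k j, 0 ≤ R k j)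
    (A : Matrix (Fin a) (Fin b) ℝ) (j : Fin c) :
    ⨆ i, (A * R) i j ≤ ∑ k, (⨆ i, A i k) * R k j :=
  ciSup_le fun i => mul_apply (M := A) ▸
    sum_le_sum fun k _ => mul_le_mul_of_nonneg_right (le_iSup_col A i k) (hR k j)

lemma exists_row_eq_iSup_col_of_lmax_le {R : Matrix (Fin b) (Fin c) ℝ} (hR : RowStochastic R)
    (A : Matrix (Fin a) (Fin b) ℝ) (h : lmax A ≤ lmax (A * R)) (j : Fin c) :
    ∃ i, ∀ k, 0 < R k j → A i k = ⨆ i, A i k := by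
  set col : Fin b → ℝ := fun k => ⨆ i, A i k
  have hsum : ∑ j, ∑ k, col k * R k j = lmax A := by
    rw [sum_comm]; simp [lmax, col, ← mul_sum, hR.2]
  have hcol : ⨆ i, (A * R) i j = ∑ k, col k * R k j :=
    (sum_eq_sum_iff_of_le fun j _ => iSup_col_mul_le_sum hR.1 A j).mp
      (le_antisymm (sum_le_sum fun j _ => iSup_col_mul_le_sum hR.1 A j) (hsum ▸ h)) j
      (mem_univ j)
  obtain ⟨i, hi⟩ := exists_eq_ciSup_of_finite (f := fun i => (A * R) i j)
  have hgap : ∑ k, (col k - A i k) * R k j = 0 := by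
    rw [← hi] at hcol
    simp only [sub_mul, sum_sub_distrib, ← hcol, mul_apply, sub_self]
  refine ⟨i, fun k hk => ?_⟩
  have := (sum_eq_zero_iff_of_nonneg fun k _ =>
    mul_nonneg (sub_nonneg.mpr (le_iSup_col A i k)) (hR.1 k j)).mp hgap k (mem_univ k)
  nlinarith [(mul_eq_zero.mp this).resolve_right hk.ne']

end ColumnMaxima

section Compression

variable {m n n' : ℕ} {A : Matrix (Fin m) (Fin n) ℝ}

/-- `A` is ultraweakly equivalent to the `m × n'` matrix of its column-group sums. -/
theorem Incompressible.le_of_col_eq_mul_sum_fiber (hinc : Incompressible A) (hA : RowStochastic A)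
    (f : Fin n → Fin n') (w : Fin n → ℝ) (hw0 : ∀ j, 0 ≤ w j)
    (hw1 : ∀ j', ∑ j with f j = j', w j = 1)
    (hcol : ∀ i j, A i j = w j * ∑ j₂ with f j₂ = f j, A i j₂) : n ≤ n' := by
  set P : Matrix (Fin n) (Fin n') ℝ := of fun j j' => if f j = j' then 1 else 0
  set E : Matrix (Fin n') (Fin n) ℝ := of fun j' j => if f j = j' then w j else 0
  have hP : RowStochastic P :=
    ⟨fun j j' => by simp only [P, of_apply]; split_ifs <;> norm_num, fun j => by simp [P]⟩
  have hE : RowStochastic E :=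
    ⟨fun j' j => by simp only [E, of_apply]; split_ifs <;> simp [hw0],
      fun j' => by simp [E, ← sum_filter, hw1]⟩
  have hAP : ∀ i j', (A * P) i j' = ∑ j with f j = j', A i j := fun i j' => by
    simp [P, mul_apply, sum_filter]
  have hAPE : A * P * E = A := by
    ext i j
    simp [mul_apply (M := A * P), E, hAP, mul_comm, ← hcol]
  have hequiv₁ : UWMaj (A * P) A := ⟨1, P, .one, hP, by rw [Matrix.one_mul]⟩
  have hequiv₂ : UWMaj A (A * P) := ⟨1, E, .one, hE, by rw [Matrix.one_mul, hAPE]⟩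
  exact (hinc m n' (A * P) (hA.mul hP) hequiv₁ hequiv₂).2

end Compression

namespace Incompressible

variable {m n : ℕ} {A : Matrix (Fin m) (Fin n) ℝ}

theorem eq_of_cols_proportional (hinc : Incompressible A) (hA : RowStochastic A)
    {k k' : Fin n} {a b : ℝ} (ha : 0 ≤ a) (hb : 0 ≤ b) {x : Fin m → ℝ}
    (hk : ∀ i, A i k = a * x i) (hk' : ∀ i, A i k' = b * x i) : k = k' := by
  by_contra hkk
  obtain ⟨n', rfl⟩ : ∃ n', n = n' + 1 := Nat.exists_eq_succ_of_ne_zero k.pos.ne'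
  set g : Fin (n' + 1) → Fin (n' + 1) := fun j => if j = k' then k else j
  have hg : ∀ j, g j ≠ k' := fun j => by simp only [g]; split_ifs <;> assumption
  set f : Fin (n' + 1) → Fin n' := fun j => (finSuccAboveEquiv k').symm ⟨g j, hg j⟩
  have hfiber :
      ∀ j, ({j₂ | f j₂ = f j} : Finset _) = if j = k ∨ j = k' then {k, k'} else {j} := by
    intro j
    ext j₂
    simp only [f, g, Equiv.apply_eq_iff_eq, Subtype.mk.injEq, mem_filter, mem_univ, true_and]
    split_ifs <;> simp <;> grind
  -- when `a = b = 0` both columns vanish, and `s = 0` (junk division) still works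
  set s := a / (a + b)
  set w : Fin (n' + 1) → ℝ := fun j => if j = k then s else if j = k' then 1 - s else 1
  have hs : s * (a + b) = a := by
    rcases (add_nonneg ha hb).eq_or_lt with h | h
    · simp [s, ← h]; linarith
    · exact div_mul_cancel₀ a h.ne'
  have hs1 : s ≤ 1 := div_le_one_of_le₀ (by linarith) (add_nonneg ha hb)
  refine absurd (hinc.le_of_col_eq_mul_sum_fiber hA f w ?_ ?_ ?_) (by omega)
  · intro j
    simp only [w]
    split_ifs
    · positivity
    · linarith
    · norm_num
  · intro j'
    obtain ⟨j, rfl⟩ : ∃ j, f j = j' :=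
      ⟨finSuccAboveEquiv k' j', by simp [f, g, (finSuccAboveEquiv k' j').2]⟩
    rw [hfiber]
    split_ifs with h
    · simp [sum_pair hkk, w, Ne.symm hkk]
    · simp [w]; grind
  · intro i j
    rw [hfiber]
    split_ifs with h
    · rw [sum_pair hkk, hk, hk']
      rcases h with rfl | rfl
      · simp only [w, if_pos, hk]
        linear_combination -(x i) * hs
      · simp only [w, if_neg (Ne.symm hkk), if_pos, hk']
        linear_combination (x i) * hs
    · simp [w]; grind

end Incompressible

namespace Matrix

variable {ι : Type*}

lemma PosSemidef.ofReal_re_diag {N : Matrix ι ι ℂ} (hN : N.PosSemidef) (i : ι) :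
    ((N i i).re : ℂ) = N i i :=
  (Complex.eq_re_of_ofReal_le (r := 0) (by simpa using hN.diag_nonneg)).symm

lemma PosSemidef.re_diag_nonneg {N : Matrix ι ι ℂ} (hN : N.PosSemidef) (i : ι) :
    0 ≤ (N i i).re :=
  (Complex.nonneg_iff.mp hN.diag_nonneg).1

variable [Fintype ι] [DecidableEq ι]

lemma PosSemidef.apply_eq_zero_of_diag_eq_zero {N : Matrix ι ι ℂ} (hN : N.PosSemidef) {i : ι}
    (h : N i i = 0) (j : ι) : N j i = 0 := by
  have hcol := (hN.dotProduct_mulVec_zero_iff (Pi.single i 1)).mp (by simp [h])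
  simpa using congrFun hcol j

lemma re_trace_diagonal_mul (w : ι → ℝ) (N : Matrix ι ι ℂ) :
    (diagonal (RCLike.ofReal ∘ w) * N).trace.re = ∑ i, w i * (N i i).re := by
  simp [trace, Complex.re_sum]

lemma PosSemidef.eq_trace_smul_diagonal {N : Matrix ι ι ℂ} (hN : N.PosSemidef) {w : ι → ℝ}
    (hw0 : ∀ i, 0 ≤ w i) (hw1 : ∑ i, w i = 1)
    (h : ∑ i, w i * (N i i).re = ∑ i, (N i i).re) :
    N = N.trace • diagonal (RCLike.ofReal ∘ w) := by
  have hre : ∀ i, (N i i).re = 0 ↔ N i i = 0 := fun i => by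
    rw [← hN.ofReal_re_diag i, Complex.ofReal_eq_zero, Complex.ofReal_re]
  have hterm : ∀ i, w i * (N i i).re = (N i i).re := by
    refine fun i => (sum_eq_sum_iff_of_le fun i _ => ?_).mp h i (mem_univ i)
    exact mul_le_of_le_one_left (hN.re_diag_nonneg i)
      (hw1 ▸ single_le_sum (fun j _ => hw0 j) (mem_univ i))
  by_cases hN0 : ∀ i, N i i = 0
  · have : N = 0 := ext fun i j => hN.apply_eq_zero_of_diag_eq_zero (hN0 j) i
    simp [this]
  obtain ⟨i₀, hi₀⟩ := not_forall.mp hN0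
  have hwi₀ : w i₀ = 1 := by
    have := hterm i₀
    have : (w i₀ - 1) * (N i₀ i₀).re = 0 := by linarith
    linarith [(mul_eq_zero.mp this).resolve_right ((hre i₀).not.mpr hi₀)]
  have hw : ∀ i ≠ i₀, w i = 0 := fun i hi => by
    have : w i₀ + w i ≤ 1 := calc
      w i₀ + w i = ∑ j ∈ {i₀, i}, w j := (sum_pair (Ne.symm hi)).symm
      _ ≤ ∑ j, w j := sum_le_sum_of_subset_of_nonneg (subset_univ _) fun j _ _ => hw0 j
      _ = 1 := hw1
    linarith [hw0 i]
  have hdiag : ∀ i ≠ i₀, N i i = 0 := fun i hi => by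
    rw [← hre, ← hterm i, hw i hi, zero_mul]
  have hoff : ∀ i j, ¬(i = i₀ ∧ j = i₀) → N i j = 0 := by
    intro i j hij
    by_cases hj : j = i₀
    · rw [← hN.1.apply, hN.apply_eq_zero_of_diag_eq_zero (hdiag i (by tauto)) j, star_zero]
    · exact hN.apply_eq_zero_of_diag_eq_zero (hdiag j hj) i
  have htrace : N.trace = N i₀ i₀ :=
    sum_eq_single i₀ (fun i _ hi => hdiag i hi) (by simp)
  ext i j
  by_cases hij : i = i₀ ∧ j = i₀
  · simp [hij.1, hij.2, htrace, hwi₀]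
  · rw [hoff i j hij, smul_apply, diagonal_apply]
    split_ifs with h
    · subst h
      simp [hw i fun h => hij ⟨h, h⟩]
    · simp

open Unitary in
lemma trace_conjStarAlgAut (U : unitary (Matrix ι ι ℂ)) (X : Matrix ι ι ℂ) :
    (conjStarAlgAut ℂ _ U X).trace = X.trace := by
  rw [conjStarAlgAut_apply, trace_mul_cycle, coe_star_mul_self, Matrix.one_mul]

open Unitary in
lemma PosSemidef.exists_conj_diagonal {ρ : Matrix ι ι ℂ} (hρ : ρ.PosSemidef)
    (htr : ρ.trace = 1) :
    ∃ (U : unitary (Matrix ι ι ℂ)) (w : ι → ℝ), (∀ i, 0 ≤ w i) ∧ ∑ i, w i = 1 ∧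
      ρ = conjStarAlgAut ℂ _ U (diagonal (RCLike.ofReal ∘ w)) := by
  refine ⟨_, _, hρ.eigenvalues_nonneg, ?_, hρ.1.spectral_theorem⟩
  have h := hρ.1.trace_eq_sum_eigenvalues
  rw [htr] at h
  exact Complex.ofReal_injective (by simpa using h.symm)

open Unitary in
lemma PosSemidef.re_trace_mul_le {ρ M : Matrix ι ι ℂ} (hρ : ρ.PosSemidef)
    (htr : ρ.trace = 1) (hM : M.PosSemidef) : (ρ * M).trace.re ≤ M.trace.re := by
  obtain ⟨U, w, hw0, hw1, rfl⟩ := hρ.exists_conj_diagonal htr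
  set φ := conjStarAlgAut ℂ _ U
  have hN : (φ.symm M).PosSemidef := hM.conjTranspose_mul_mul_same (U : Matrix ι ι ℂ)
  rw [← φ.apply_symm_apply M, ← map_mul, trace_conjStarAlgAut, trace_conjStarAlgAut,
    re_trace_diagonal_mul, trace, Complex.re_sum]
  exact sum_le_sum fun i _ => mul_le_of_le_one_left (hN.re_diag_nonneg i)
    (hw1 ▸ single_le_sum (fun j _ => hw0 j) (mem_univ i))

open Unitary in
lemma PosSemidef.eq_trace_smul_of_re_trace_mul_eq {ρ M : Matrix ι ι ℂ} (hρ : ρ.PosSemidef)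
    (htr : ρ.trace = 1) (hM : M.PosSemidef) (h : (ρ * M).trace.re = M.trace.re) :
    M = M.trace • ρ := by
  obtain ⟨U, w, hw0, hw1, rfl⟩ := hρ.exists_conj_diagonal htr
  set φ := conjStarAlgAut ℂ _ U
  have hN : (φ.symm M).PosSemidef := hM.conjTranspose_mul_mul_same (U : Matrix ι ι ℂ)
  rw [← φ.apply_symm_apply M, ← map_mul, trace_conjStarAlgAut, trace_conjStarAlgAut,
    re_trace_diagonal_mul, trace, Complex.re_sum] at h
  conv_lhs => rw [← φ.apply_symm_apply M, hN.eq_trace_smul_diagonal hw0 hw1 h, map_smul]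
  rw [← trace_conjStarAlgAut U (φ.symm M), φ.apply_symm_apply]

lemma PosSemidef.re_trace_mul_eq_mul_of_re_trace_mul_eq {ρ M : Matrix ι ι ℂ}
    (hρ : ρ.PosSemidef) (htr : ρ.trace = 1) (hM : M.PosSemidef)
    (h : (ρ * M).trace.re = M.trace.re) (σ : Matrix ι ι ℂ) :
    (σ * M).trace.re = M.trace.re * (σ * ρ).trace.re := by
  conv_lhs => rw [hρ.eq_trace_smul_of_re_trace_mul_eq htr hM h]
  rw [Matrix.mul_smul, trace_smul, smul_eq_mul, Complex.mul_re,
    ← (Complex.nonneg_iff.mp hM.trace_nonneg).2, zero_mul, sub_zero]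

end Matrix

lemma sum_re_trace_eq_of_sum_eq_one {d n : ℕ} {M : Fin n → Matrix (Fin d) (Fin d) ℂ}
    (hM : ∑ j, M j = 1) : ∑ j, (M j).trace.re = d := by
  rw [← Complex.re_sum, ← trace_sum, hM, trace_one]
  simp

theorem postprocessing_is_permutation_general (d m n : ℕ) (hm : 0 < m)
    (A : Matrix (Fin m) (Fin n) ℝ) (hA : RowStochastic A)
    (hQ : QuantumImpl d m n A)
    (hinc : Incompressible A) (hlmaxA : lmax A = d)
    (L : Matrix (Fin (m + 1)) (Fin m) ℝ) (hL : RowStochastic L)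
    (R : Matrix (Fin n) (Fin n) ℝ) (hR : RowStochastic R)
    (B : Matrix (Fin (m + 1)) (Fin n) ℝ) (hB : B = L * A * R)
    (hlmaxB : lmax B = d) :
    ∃ σ : Equiv.Perm (Fin n), ∀ i j, R i j = if σ i = j then 1 else 0 := by
  have : NeZero m := ⟨hm.ne'⟩
  obtain ⟨ρ, M, hρ, hM, hMsum, hAρM⟩ := hQ
  have hsup : ∀ k, ⨆ i, A i k = (M k).trace.re := by
    have hle : ∀ k, ⨆ i, A i k ≤ (M k).trace.re := fun k =>
      ciSup_le fun i => hAρM i k ▸ (hρ i).1.re_trace_mul_le (hρ i).2 (hM k)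
    have hsum : ∑ k, ⨆ i, A i k = ∑ k, (M k).trace.re := by
      rw [sum_re_trace_eq_of_sum_eq_one hMsum, ← hlmaxA, lmax]
    exact fun k => (sum_eq_sum_iff_of_le fun k _ => hle k).mp hsum k (mem_univ k)
  have hAR : lmax A ≤ lmax (A * R) := by
    rw [hlmaxA, ← hlmaxB, hB, Matrix.mul_assoc]
    exact hL.lmax_mul_le _
  refine hR.exists_perm_of_pos_unique fun j k k' hk hk' => ?_
  obtain ⟨i, hi⟩ := exists_row_eq_iSup_col_of_lmax_le hR A hAR j
  have hcol : ∀ k, 0 < R k j → ∀ l, A l k = (M k).trace.re * (ρ l * ρ i).trace.re :=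
    fun k hk l => by
      rw [hAρM]
      exact (hρ i).1.re_trace_mul_eq_mul_of_re_trace_mul_eq (hρ i).2 (hM k)
        (by rw [← hAρM, hi k hk, hsup k]) (ρ l)
  have htr : ∀ k, 0 ≤ (M k).trace.re := fun k =>
    (Complex.nonneg_iff.mp (hM k).trace_nonneg).1
  exact hinc.eq_of_cols_proportional hA (htr k) (htr k') (hcol k hk) (hcol k' hk')

/-- if `A` is incompressible with a dimension-`d` quantum
implementation and `λmax(A) = d`, and `B = L·A·R` (with `L` of size
`(m+1)×m` and `R` of size `n×n`) also has `λmax(B) = d`, then `R` is a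
permutation matrix. -/
theorem postprocessing_is_permutation (d m n : ℕ) (hd : 0 < d) (hm : 0 < m) (hn : 0 < n)
    (A : Matrix (Fin m) (Fin n) ℝ) (hA : RowStochastic A)
    (hQ : QuantumImpl d m n A)
    (hinc : Incompressible A) (hlmaxA : lmax A = d)
    (L : Matrix (Fin (m + 1)) (Fin m) ℝ) (hL : RowStochastic L)
    (R : Matrix (Fin n) (Fin n) ℝ) (hR : RowStochastic R)
    (B : Matrix (Fin (m + 1)) (Fin n) ℝ) (hB : B = L * A * R)
    (hlmaxB : lmax B = d) :
    ∃ σ : Equiv.Perm (Fin n), ∀ i j, R i j = if σ i = j then 1 else 0 :=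
  postprocessing_is_permutation_general d m n hm A hA hQ hinc hlmaxA L hL R hR B hB hlmaxB
end

section
/- Let d ≥ 1 and let A be an m×n row-stochastic real matrix with a quantum implementation in dimension d. If the d×d identity matrix I_d is ultraweakly majorized by A (there exist row-stochastic L, R with L·A·R = I_d), then A is ultraweakly majorized by I_d as well (there exist row-stochastic L', R' with L'·I_d·R' = A); that is, A is ultraweakly equivalent to I_d, so the equivalence class of I_d is maximal among quantum communication matrices in dimension d. -/
open Matrix BigOperators
open scoped ComplexOrder

/-!
Push the states through `L` and the effects through `R`: the mixtures `σ k = ∑ i, L k i • ρ i`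
and the coarse-grained POVM `N k = ∑ j, R j k • M j` satisfy `tr (σ k * N k) = 1`. Hence every
`N k` fixes a unit vector, so `tr (N k) ≥ 1`; since the `d` traces add up to `tr 1 = d`, every
`N k` is a rank-one projection, and projections in a POVM are mutually orthogonal. Each effect
`M j` enters some `N k` with positive weight, so it lies below a multiple of that rank-one
projection and is therefore a multiple of it. Consequently
`tr (ρ i * M j) = ∑ k, tr (ρ i * N k) * tr (N k * M j)`, which factors `A` through `I_d`.
-/

namespace Matrix

variable {ι 𝕜 : Type*} [Fintype ι] [RCLike 𝕜]

theorem vecMulVec_star_mul_self {u : ι → 𝕜} (hu : star u ⬝ᵥ u = 1) :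
    vecMulVec u (star u) * vecMulVec u (star u) = vecMulVec u (star u) := by
  rw [vecMulVec_mul_vecMulVec, hu, one_smul]

theorem trace_mul_vecMulVec_star (A : Matrix ι ι 𝕜) (u : ι → 𝕜) :
    (A * vecMulVec u (star u)).trace = star u ⬝ᵥ A *ᵥ u := by
  rw [mul_vecMulVec, trace_vecMulVec, dotProduct_comm]

theorem exists_smul_star_dotProduct_smul_eq_one {w : ι → 𝕜} (hw : w ≠ 0) :
    ∃ c : 𝕜, star (c • w) ⬝ᵥ (c • w) = 1 := by
  obtain ⟨r, hr, hrw⟩ := RCLike.pos_iff_exists_ofReal.mp (dotProduct_star_self_pos_iff.mpr hw)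
  refine ⟨(((√r)⁻¹ : ℝ) : 𝕜), ?_⟩
  rw [star_smul, smul_dotProduct, dotProduct_smul, ← hrw, RCLike.star_def, RCLike.conj_ofReal,
    smul_eq_mul, smul_eq_mul, ← RCLike.ofReal_mul, ← RCLike.ofReal_mul, ← mul_assoc, ← mul_inv,
    Real.mul_self_sqrt hr.le, inv_mul_cancel₀ hr.ne', RCLike.ofReal_one]

namespace PosSemidef

variable {A B : Matrix ι ι 𝕜}

theorem exists_eq_conjTranspose_mul_self (hA : A.PosSemidef) :
    ∃ X : Matrix ι ι 𝕜, A = Xᴴ * X := by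
  classical
  open scoped MatrixOrder in
  exact CStarAlgebra.nonneg_iff_eq_star_mul_self.mp hA.nonneg

private theorem trace_conjTranspose_mul_self_mul (X Y : Matrix ι ι 𝕜) :
    (Xᴴ * X * (Yᴴ * Y)).trace = ((Y * Xᴴ)ᴴ * (Y * Xᴴ)).trace := by
  rw [conjTranspose_mul, conjTranspose_conjTranspose, Matrix.mul_assoc, trace_mul_comm,
    Matrix.mul_assoc, Matrix.mul_assoc, Matrix.mul_assoc]

theorem trace_mul_nonneg_s15 (hA : A.PosSemidef) (hB : B.PosSemidef) : 0 ≤ (A * B).trace := by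
  obtain ⟨X, rfl⟩ := hA.exists_eq_conjTranspose_mul_self
  obtain ⟨Y, rfl⟩ := hB.exists_eq_conjTranspose_mul_self
  rw [trace_conjTranspose_mul_self_mul]
  exact (posSemidef_conjTranspose_mul_self _).trace_nonneg

theorem mul_eq_zero_of_trace_mul_eq_zero (hA : A.PosSemidef) (hB : B.PosSemidef)
    (h : (A * B).trace = 0) : A * B = 0 := by
  obtain ⟨X, rfl⟩ := hA.exists_eq_conjTranspose_mul_self
  obtain ⟨Y, rfl⟩ := hB.exists_eq_conjTranspose_mul_self
  rw [trace_conjTranspose_mul_self_mul, trace_conjTranspose_mul_self_eq_zero_iff] at h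
  calc Xᴴ * X * (Yᴴ * Y) = Xᴴ * (Y * Xᴴ)ᴴ * Y := by
        simp only [conjTranspose_mul, conjTranspose_conjTranspose, Matrix.mul_assoc]
    _ = 0 := by rw [h]; simp

variable [DecidableEq ι]

theorem mul_eq_self_of_trace_mul_eq_trace (hA : A.PosSemidef) (hB : (1 - B).PosSemidef)
    (h : (A * B).trace = A.trace) : A * B = A := by
  have h0 := hA.mul_eq_zero_of_trace_mul_eq_zero hB
    (by rw [Matrix.mul_sub, trace_sub, h, Matrix.mul_one, sub_self])
  rwa [Matrix.mul_sub, Matrix.mul_one, sub_eq_zero, eq_comm] at h0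

theorem exists_mulVec_eq_self_of_trace_mul_eq_one {σ N : Matrix ι ι 𝕜} (hσ : σ.PosSemidef)
    (hσ1 : σ.trace = 1) (hN : (1 - N).PosSemidef) (h : (σ * N).trace = 1) :
    ∃ u, N *ᵥ u = u ∧ star u ⬝ᵥ u = 1 := by
  have hσN : σ * N = σ := hσ.mul_eq_self_of_trace_mul_eq_trace hN (h.trans hσ1.symm)
  have hNσ : N * σ = σ := by
    have hN' : N.IsHermitian := by simpa using isHermitian_one.sub hN.isHermitian
    simpa only [conjTranspose_mul, hσ.isHermitian.eq, hN'.eq] using congr_arg (·ᴴ) hσN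
  obtain ⟨v, hv⟩ : ∃ v, σ *ᵥ v ≠ 0 := by
    by_contra! hσv
    have hσ0 : σ = 0 := ext_iff_mulVec.mpr fun v => by rw [hσv v, zero_mulVec]
    simp [hσ0] at hσ1
  obtain ⟨c, hc⟩ := exists_smul_star_dotProduct_smul_eq_one hv
  exact ⟨c • σ *ᵥ v, by rw [mulVec_smul, mulVec_mulVec, hNσ], hc⟩

end PosSemidef

variable [DecidableEq ι] {u : ι → 𝕜}

theorem posSemidef_one_sub_vecMulVec_star (hu : star u ⬝ᵥ u = 1) :
    (1 - vecMulVec u (star u)).PosSemidef := by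
  have hP : (vecMulVec u (star u))ᴴ = vecMulVec u (star u) := by
    rw [conjTranspose_vecMulVec, star_star]
  convert posSemidef_conjTranspose_mul_self (1 - vecMulVec u (star u)) using 1
  rw [conjTranspose_sub, conjTranspose_one, hP, Matrix.sub_mul, Matrix.mul_sub, Matrix.mul_sub,
    vecMulVec_star_mul_self hu]
  simp

theorem one_le_trace_of_mulVec_eq_self {N : Matrix ι ι 𝕜} (hN : N.PosSemidef)
    (hNu : N *ᵥ u = u) (hu : star u ⬝ᵥ u = 1) : 1 ≤ N.trace := by
  have := hN.trace_mul_nonneg_s15 (posSemidef_one_sub_vecMulVec_star hu)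
  rwa [Matrix.mul_sub, Matrix.mul_one, trace_sub, trace_mul_vecMulVec_star, hNu, hu,
    sub_nonneg] at this

theorem eq_vecMulVec_star_of_trace_eq_one {N : Matrix ι ι 𝕜} (hN : N.PosSemidef)
    (hNu : N *ᵥ u = u) (hu : star u ⬝ᵥ u = 1) (h1 : N.trace = 1) :
    N = vecMulVec u (star u) := by
  have := hN.mul_eq_self_of_trace_mul_eq_trace (posSemidef_one_sub_vecMulVec_star hu)
    (by rw [trace_mul_vecMulVec_star, hNu, hu, h1])
  rw [← this, mul_vecMulVec, hNu]

theorem eq_smul_vecMulVec_star_of_posSemidef_sub {X : Matrix ι ι 𝕜} (hX : X.PosSemidef)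
    (hu : star u ⬝ᵥ u = 1) (hXP : (vecMulVec u (star u) - X).PosSemidef) :
    X = (star u ⬝ᵥ X *ᵥ u) • vecMulVec u (star u) := by
  set P := vecMulVec u (star u)
  have hQ := posSemidef_one_sub_vecMulVec_star hu
  have hPQ : (P * (1 - P)).trace = 0 := by
    rw [Matrix.mul_sub, Matrix.mul_one, vecMulVec_star_mul_self hu, sub_self, trace_zero]
  have hXQ : (X * (1 - P)).trace = 0 := by
    refine le_antisymm ?_ (hX.trace_mul_nonneg_s15 hQ)
    have := hXP.trace_mul_nonneg_s15 hQ
    rwa [Matrix.sub_mul, trace_sub, hPQ, zero_sub, neg_nonneg] at this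
  have hXP : X * P = X := by
    have := hX.mul_eq_zero_of_trace_mul_eq_zero hQ hXQ
    rwa [Matrix.mul_sub, Matrix.mul_one, sub_eq_zero, eq_comm] at this
  have hPX : P * X = X := by
    simpa only [conjTranspose_mul, hX.isHermitian.eq, P, conjTranspose_vecMulVec, star_star]
      using congr_arg conjTranspose hXP
  calc X = P * (X * P) := by rw [hXP, hPX]
    _ = (star u ⬝ᵥ X *ᵥ u) • P := by
      rw [mul_vecMulVec, vecMulVec_mul_vecMulVec, vecMulVec_smul]

end Matrix

structure IsState {ι : Type*} [Fintype ι] (ρ : Matrix ι ι ℂ) : Prop where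
  posSemidef : ρ.PosSemidef
  trace_eq_one : ρ.trace = 1

structure IsPOVM {ι κ : Type*} [Fintype ι] [DecidableEq ι] [Fintype κ]
    (M : κ → Matrix ι ι ℂ) : Prop where
  posSemidef : ∀ j, (M j).PosSemidef
  sum_eq_one : ∑ j, M j = 1

def bornMatrix {ι κ μ : Type*} [Fintype ι] (ρ : κ → Matrix ι ι ℂ) (M : μ → Matrix ι ι ℂ) :
    Matrix κ μ ℝ :=
  of fun i j => (ρ i * M j).trace.re

section Quantum

variable {ι : Type*} [Fintype ι]

theorem isState_vecMulVec_star {u : ι → ℂ} (hu : star u ⬝ᵥ u = 1) :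
    IsState (vecMulVec u (star u)) :=
  ⟨posSemidef_vecMulVec_self_star u, by rw [trace_vecMulVec, dotProduct_comm, hu]⟩

theorem isState_sum_smul {m m' : ℕ} {ρ : Fin m → Matrix ι ι ℂ} (hρ : ∀ i, IsState (ρ i))
    {L : Matrix (Fin m') (Fin m) ℝ} (hL : RowStochastic L) (k : Fin m') :
    IsState (∑ i, L k i • ρ i) := by
  refine ⟨posSemidef_sum _ fun i _ => (hρ i).posSemidef.smul (hL.1 k i), ?_⟩
  simp only [trace_sum, trace_smul, fun i => (hρ i).trace_eq_one, Complex.real_smul, mul_one]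
  exact_mod_cast hL.2 k

theorem bornMatrix_sum_smul {κ κ' μ μ' : Type*} [Fintype κ] [Fintype μ]
    (ρ : κ → Matrix ι ι ℂ) (M : μ → Matrix ι ι ℂ) (L : Matrix κ' κ ℝ) (R : Matrix μ μ' ℝ) :
    bornMatrix (fun k => ∑ i, L k i • ρ i) (fun k => ∑ j, R j k • M j) =
      L * bornMatrix ρ M * R := by
  ext k k'
  simp only [bornMatrix, of_apply, mul_apply, Finset.sum_mul, Finset.mul_sum, trace_sum,
    smul_mul_smul_comm, trace_smul, Complex.re_sum, Complex.smul_re, smul_eq_mul]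
  exact Finset.sum_congr rfl fun _ _ => Finset.sum_congr rfl fun _ _ => by ring

variable [DecidableEq ι]

theorem rowStochastic_bornMatrix {m n : ℕ} {ρ : Fin m → Matrix ι ι ℂ}
    (hρ : ∀ i, IsState (ρ i)) {M : Fin n → Matrix ι ι ℂ} (hM : IsPOVM M) :
    RowStochastic (bornMatrix ρ M) := by
  refine ⟨fun i j => (Complex.nonneg_iff.mp
    ((hρ i).posSemidef.trace_mul_nonneg_s15 (hM.posSemidef j))).1, fun i => ?_⟩
  simp only [bornMatrix, of_apply, ← Complex.re_sum, ← trace_sum, ← Matrix.mul_sum,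
    hM.sum_eq_one, Matrix.mul_one, (hρ i).trace_eq_one, Complex.one_re]

theorem bornMatrix_mul_bornMatrix {κ μ ν : Type*} [Fintype ν] [DecidableEq ν]
    (ρ : κ → Matrix ι ι ℂ) {N : ν → Matrix ι ι ℂ} {M : μ → Matrix ι ι ℂ}
    (hNN : bornMatrix N N = 1) (hM : ∀ j, ∃ k, ∃ c : ℝ, M j = c • N k) :
    bornMatrix ρ N * bornMatrix N M = bornMatrix ρ M := by
  ext i j
  obtain ⟨k, c, hMj⟩ := hM j
  have hNM : ∀ k', bornMatrix N M k' j = c * (1 : Matrix ν ν ℝ) k' k := fun k' => by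
    simp [← hNN, bornMatrix, hMj]
  simp only [mul_apply, hNM, one_apply, mul_ite, mul_one, mul_zero, Finset.sum_ite_eq',
    Finset.mem_univ, if_true]
  simp [bornMatrix, hMj, mul_comm]

theorem IsPOVM.sum_smul {n n' : ℕ} {M : Fin n → Matrix ι ι ℂ} (hM : IsPOVM M)
    {R : Matrix (Fin n) (Fin n') ℝ} (hR : RowStochastic R) :
    IsPOVM fun k => ∑ j, R j k • M j := by
  refine ⟨fun k => posSemidef_sum _ fun j _ => (hM.posSemidef j).smul (hR.1 j k), ?_⟩
  rw [Finset.sum_comm, ← hM.sum_eq_one]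
  refine Finset.sum_congr rfl fun j _ => ?_
  rw [← Finset.sum_smul, hR.2 j, one_smul]

theorem IsPOVM.exists_eq_smul_of_sum_smul_eq_vecMulVec {n n' : ℕ} {M : Fin n → Matrix ι ι ℂ}
    (hM : IsPOVM M) {R : Matrix (Fin n) (Fin n') ℝ} (hR : RowStochastic R)
    {N : Fin n' → Matrix ι ι ℂ} (hN : ∀ k, N k = ∑ j, R j k • M j) {u : Fin n' → ι → ℂ}
    (hu : ∀ k, star (u k) ⬝ᵥ u k = 1) (hNu : ∀ k, N k = vecMulVec (u k) (star (u k)))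
    (j : Fin n) : ∃ k, ∃ c : ℝ, M j = c • N k := by
  obtain ⟨k, -, hk⟩ :=
    Finset.exists_lt_of_sum_lt (by simp [hR.2 j] : ∑ _k, (0 : ℝ) < ∑ k, R j k)
  have hRM := (hM.posSemidef j).smul hk.le
  have hle : (vecMulVec (u k) (star (u k)) - R j k • M j).PosSemidef := by
    rw [← hNu k, hN k, ← Finset.sum_erase_add _ _ (Finset.mem_univ j), add_sub_cancel_right]
    exact posSemidef_sum _ fun j' _ => (hM.posSemidef j').smul (hR.1 j' k)
  have heq := eq_smul_vecMulVec_star_of_posSemidef_sub hRM (hu k) hle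
  set c := star (u k) ⬝ᵥ (R j k • M j) *ᵥ u k
  have hc : c = (c.re : ℂ) := Complex.eq_re_of_ofReal_le (hRM.dotProduct_mulVec_nonneg (u k))
  rw [hc, Complex.coe_smul, ← hNu k] at heq
  refine ⟨k, (R j k)⁻¹ * c.re, ?_⟩
  rw [mul_smul, ← heq, inv_smul_smul₀ hk.ne']

namespace IsPOVM

variable {κ : Type*} [Fintype κ] {M : κ → Matrix ι ι ℂ}

theorem posSemidef_one_sub (hM : IsPOVM M) (k : κ) : (1 - M k).PosSemidef := by
  classical
  rw [← hM.sum_eq_one, ← Finset.sum_erase_add _ _ (Finset.mem_univ k), add_sub_cancel_right]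
  exact posSemidef_sum _ fun j _ => hM.posSemidef j

theorem mul_eq_zero_of_mul_self_eq (hM : IsPOVM M) {k k' : κ} (hk : M k * M k = M k)
    (hne : k ≠ k') : M k * M k' = 0 := by
  classical
  refine (hM.posSemidef k).mul_eq_zero_of_trace_mul_eq_zero (hM.posSemidef k') ?_
  have hsum : ∑ j ∈ Finset.univ.erase k, (M k * M j).trace = 0 := by
    have := congr_arg trace (Matrix.mul_sum Finset.univ M (M k))
    rwa [hM.sum_eq_one, Matrix.mul_one, trace_sum, ← Finset.sum_erase_add _ _ (Finset.mem_univ k),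
      hk, right_eq_add] at this
  exact (Finset.sum_eq_zero_iff_of_nonneg fun j _ =>
    (hM.posSemidef k).trace_mul_nonneg_s15 (hM.posSemidef j)).mp hsum k'
      (Finset.mem_erase.mpr ⟨hne.symm, Finset.mem_univ _⟩)

theorem exists_eq_vecMulVec_star_of_bornMatrix_eq_one {N σ : ι → Matrix ι ι ℂ}
    (hN : IsPOVM N) (hσ : ∀ k, IsState (σ k)) (h : bornMatrix σ N = 1) :
    ∃ u : ι → ι → ℂ, (∀ k, star (u k) ⬝ᵥ u k = 1) ∧
      ∀ k, N k = vecMulVec (u k) (star (u k)) := by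
  have hσN : ∀ k, (σ k * N k).trace = 1 := fun k => by
    rw [Complex.eq_re_of_ofReal_le ((hσ k).posSemidef.trace_mul_nonneg_s15 (hN.posSemidef k))]
    exact_mod_cast congr_fun (congr_fun h k) k |>.trans (one_apply_eq k)
  choose u hNu hu using fun k => (hσ k).posSemidef.exists_mulVec_eq_self_of_trace_mul_eq_one
    (hσ k).trace_eq_one (hN.posSemidef_one_sub k) (hσN k)
  have hle : ∀ k ∈ Finset.univ, (1 : ℂ) ≤ (N k).trace := fun k _ =>
    one_le_trace_of_mulVec_eq_self (hN.posSemidef k) (hNu k) (hu k)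
  have htr : ∀ k ∈ Finset.univ, 1 = (N k).trace := by
    refine (Finset.sum_eq_sum_iff_of_le hle).mp ?_
    rw [← trace_sum, hN.sum_eq_one, trace_one, Finset.sum_const, Finset.card_univ, nsmul_one]
  exact ⟨u, hu, fun k => eq_vecMulVec_star_of_trace_eq_one (hN.posSemidef k) (hNu k) (hu k)
    (htr k (Finset.mem_univ k)).symm⟩

theorem bornMatrix_self_eq_one {N : ι → Matrix ι ι ℂ} (hN : IsPOVM N) {u : ι → ι → ℂ}
    (hu : ∀ k, star (u k) ⬝ᵥ u k = 1) (hNu : ∀ k, N k = vecMulVec (u k) (star (u k))) :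
    bornMatrix N N = 1 := by
  have hproj : ∀ k, N k * N k = N k := fun k => hNu k ▸ vecMulVec_star_mul_self (hu k)
  ext k k'
  rcases eq_or_ne k k' with rfl | hne
  · simp [bornMatrix, hproj, (hNu k ▸ isState_vecMulVec_star (hu k)).trace_eq_one]
  · simp [bornMatrix, hN.mul_eq_zero_of_mul_self_eq (hproj k) hne, hne]

end IsPOVM

end Quantum

theorem id_class_maximal_general (d m n : ℕ)
    (A : Matrix (Fin m) (Fin n) ℝ)
    (hQ : QuantumImpl d m n A)
    (hmaj : UWMaj (1 : Matrix (Fin d) (Fin d) ℝ) A) :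
    UWMaj A (1 : Matrix (Fin d) (Fin d) ℝ) := by
  obtain ⟨ρ, M, hρ, hMpsd, hMsum, hAρM⟩ := hQ
  obtain ⟨L, R, hL, hR, hLAR⟩ := hmaj
  have hρ : ∀ i, IsState (ρ i) := fun i => ⟨(hρ i).1, (hρ i).2⟩
  have hM : IsPOVM M := ⟨hMpsd, hMsum⟩
  have hA : A = bornMatrix ρ M := ext hAρM
  set N : Fin d → Matrix (Fin d) (Fin d) ℂ := fun k => ∑ j, R j k • M j
  have hN : IsPOVM N := hM.sum_smul hR
  obtain ⟨u, hu, hNu⟩ := hN.exists_eq_vecMulVec_star_of_bornMatrix_eq_one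
    (isState_sum_smul hρ hL) (by rw [bornMatrix_sum_smul, ← hA, hLAR])
  have hNstate : ∀ k, IsState (N k) := fun k => hNu k ▸ isState_vecMulVec_star (hu k)
  refine ⟨bornMatrix ρ N, bornMatrix N M, rowStochastic_bornMatrix hρ hN,
    rowStochastic_bornMatrix hNstate hM, ?_⟩
  rw [Matrix.mul_one, hA]
  exact bornMatrix_mul_bornMatrix ρ (hN.bornMatrix_self_eq_one hu hNu)
    (hM.exists_eq_smul_of_sum_smul_eq_vecMulVec hR (fun _ => rfl) hu hNu)

/-- if a quantum-implementable matrix `A` (in dimension `d`)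
ultraweakly majorizes `I_d`, then `A` is also majorized by `I_d`, i.e. the
class of `I_d` is maximal among quantum communication matrices. -/
theorem id_class_maximal (d m n : ℕ) (hd : 1 ≤ d)
    (A : Matrix (Fin m) (Fin n) ℝ) (hA : RowStochastic A)
    (hQ : QuantumImpl d m n A)
    (hmaj : UWMaj (1 : Matrix (Fin d) (Fin d) ℝ) A) :
    UWMaj A (1 : Matrix (Fin d) (Fin d) ℝ) :=
  id_class_maximal_general d m n A hQ hmaj
end
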